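/- Let n ≥ 8 be even with n/2 odd, G = D_{2n} the dihedral group of order 2n, H = ⟨a², b⟩ or H = ⟨a², ab⟩, and g ∈ ⟨a²⟩. If g = 1 then the graph Δ_{H,G}^g is not connected; if g ≠ 1 then there exists a vertex of Δ_{H,G}^g adjacent to all other vertices, so Δ_{H,G}^g is connected and its diameter is at most 2. -/

import Mathlib

open SimpleGraph

/-- `Z(H,G)`: the set of elements of `H` commuting with every element of `G`. -/
def relCenter (G : Type*) [Group G] (H : Subgroup G) : Set G :=
  {x : G | x ∈ H ∧ ∀ y : G, x * y = y * x}

/-- The commutator `[x,y] = x⁻¹y⁻¹xy`. -/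
def comm' {G : Type*} [Group G] (x y : G) : G :=
  x⁻¹ * y⁻¹ * x * y

lemma comm'_swap {G : Type*} [Group G] (x y : G) :
    comm' y x = (comm' x y)⁻¹ := by
  simp only [comm', mul_inv_rev, inv_inv, mul_assoc]

/-- `K(H,G) = {[x,y] : x ∈ H, y ∈ G}`. -/
def relComm (G : Type*) [Group G] (H : Subgroup G) : Set G :=
  {w : G | ∃ x ∈ H, ∃ y : G, comm' x y = w}

/-- The graph `Δ_{H,G}^g`: vertices are the elements of `G \ Z(H,G)`, and two distinct
vertices `x`, `y` are adjacent iff (`x ∈ H` or `y ∈ H`) and `[x,y] ≠ g, g⁻¹`. -/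
def gnc (G : Type*) [Group G] (H : Subgroup G) (g : G) :
    SimpleGraph (((relCenter G H)ᶜ : Set G)) where
  Adj x y := x ≠ y ∧ ((x : G) ∈ H ∨ (y : G) ∈ H) ∧
    comm' (x : G) (y : G) ≠ g ∧ comm' (x : G) (y : G) ≠ g⁻¹
  symm := by
    constructor
    rintro x y ⟨hxy, hH, h1, h2⟩
    refine ⟨fun h => hxy h.symm, hH.symm, ?_, ?_⟩
    · rw [comm'_swap, ne_eq, inv_eq_iff_eq_inv]
      exact h2
    · rw [comm'_swap, ne_eq, inv_eq_iff_eq_inv, inv_inv]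
      exact h1
  loopless := by
    constructor
    rintro x ⟨h, -⟩
    exact h rfl

/-!
Because `n/2` is odd, `r^{n/2}` is a central element lying outside `H`: both choices of `H` sit in
the kernel of a parity homomorphism `D_{2n} → ℤ/2` (which exists as `n` is even), and `r^{n/2}`
does not. For `g = 1` every commutator with this central vertex is `1 = g`, so it is isolated.
For `g = r^c ≠ 1`, a rotation `r^t ∈ ⟨r²⟩ ≤ H` only has the commutators `1` and `r^{-2t}`, so it
is adjacent to every other vertex as soon as `2t ∉ {0, c, -c}`; one of `t = 2`, `t = 4` works
because `n` divides none of `4, 8, 12`.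
-/

namespace SimpleGraph

variable {V : Type*} {G : SimpleGraph V} {v : V}

lemma IsUniversal.diam_le_two (h : G.IsUniversal v) : G.diam ≤ 2 := by
  have hecc : G.eccent v ≤ 1 := (eccent_le_one_iff v).mpr fun _ hw => h hw
  have hediam : G.ediam ≤ 2 := calc
    G.ediam ≤ 2 * G.eccent v := ediam_le_two_mul_eccent v
    _ ≤ 2 * 1 := by gcongr
    _ = 2 := mul_one 2
  exact ENat.toNat_le_of_le_natCast hediam

end SimpleGraph

section

variable {G : Type*} [Group G] {H : Subgroup G} {g : G}

lemma comm'_eq_one_iff_commute {x y : G} : comm' x y = 1 ↔ Commute x y := by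
  have h := commutatorElement_eq_one_iff_commute (g₁ := x⁻¹) (g₂ := y⁻¹)
  rwa [commutatorElement_def, inv_inv, inv_inv, Commute.inv_inv_iff] at h

lemma notMem_relCenter_of_notMem {x : G} (hx : x ∉ H) : x ∉ relCenter G H :=
  fun h => hx h.1

lemma notMem_relCenter_of_notMem_center {x : G} (hx : x ∉ Subgroup.center G) :
    x ∉ relCenter G H :=
  fun h => hx (Subgroup.mem_center_iff.mpr fun y => (h.2 y).symm)

lemma gnc_one_isIsolated {z : ((relCenter G H)ᶜ : Set G)} (hz : (z : G) ∈ Subgroup.center G) :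
    (gnc G H 1).IsIsolated z :=
  fun y hzy => hzy.2.2.1 <| comm'_eq_one_iff_commute.mpr
    (Subgroup.mem_center_iff.mp hz y).symm

lemma gnc_one_not_connected {z y : G} (hz : z ∈ Subgroup.center G) (hzH : z ∉ H)
    (hy : y ∉ Subgroup.center G) : ¬ (gnc G H 1).Connected := by
  let z' : ((relCenter G H)ᶜ : Set G) := ⟨z, notMem_relCenter_of_notMem hzH⟩
  let y' : ((relCenter G H)ᶜ : Set G) := ⟨y, notMem_relCenter_of_notMem_center hy⟩
  have : Nontrivial ((relCenter G H)ᶜ : Set G) :=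
    ⟨z', y', fun h => hy (by obtain rfl : z = y := congrArg Subtype.val h; exact hz)⟩
  exact fun hconn => hconn.preconnected.not_isIsolated z' (gnc_one_isIsolated hz)

lemma gnc_isUniversal {v : ((relCenter G H)ᶜ : Set G)} (hvH : (v : G) ∈ H)
    (hv : ∀ y, comm' (v : G) y ≠ g ∧ comm' (v : G) y ≠ g⁻¹) : (gnc G H g).IsUniversal v :=
  fun w hvw => ⟨hvw, Or.inl hvH, hv w⟩

end

namespace DihedralGroup

variable {n : ℕ}

lemma comm'_r_r (i j : ZMod n) : comm' (r i) (r j) = 1 := by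
  simp only [comm', inv_r, r_mul_r, one_def]
  ring_nf

lemma comm'_r_sr (i j : ZMod n) : comm' (r i) (sr j) = r (-(2 * i)) := by
  simp only [comm', inv_r, inv_sr, r_mul_sr, sr_mul_r, sr_mul_sr]
  ring_nf

lemma r_one_sq : (r 1 : DihedralGroup n) ^ 2 = r 2 := by
  rw [r_one_pow, Nat.cast_ofNat]

lemma r_mem_center_iff {i : ZMod n} : r i ∈ Subgroup.center (DihedralGroup n) ↔ 2 * i = 0 := by
  rw [Subgroup.mem_center_iff]
  constructor
  · intro h
    have := h (sr 0)
    rw [sr_mul_r, r_mul_sr, sr.injEq] at this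
    linear_combination this
  · rintro h (j | j)
    · rw [r_mul_r, r_mul_r, add_comm]
    · rw [sr_mul_r, r_mul_sr, sr.injEq]
      linear_combination h

lemma sr_notMem_center (hn : 2 < n) (i : ZMod n) : sr i ∉ Subgroup.center (DihedralGroup n) := by
  intro h
  have := Subgroup.mem_center_iff.mp h (r 1)
  rw [sr_mul_r, r_mul_sr, sr.injEq] at this
  have h2 : ((2 : ℕ) : ZMod n) = 0 := by push_cast; linear_combination -this
  rw [ZMod.natCast_eq_zero_iff] at h2
  exact absurd (Nat.le_of_dvd two_pos h2) (by omega)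

lemma two_mul_natCast_half (h2 : 2 ∣ n) : 2 * ((n / 2 : ℕ) : ZMod n) = 0 := by
  rw [← Nat.cast_ofNat, ← Nat.cast_mul, Nat.mul_div_cancel' h2, ZMod.natCast_self]

def parity (h2 : 2 ∣ n) (ε : ZMod 2) : DihedralGroup n →* Multiplicative (ZMod 2) where
  toFun
    | r i => .ofAdd (ZMod.castHom h2 (ZMod 2) i)
    | sr i => .ofAdd (ZMod.castHom h2 (ZMod 2) i + ε)
  map_one' := by simp [one_def, -r_zero]
  map_mul' := by
    rintro (i | i) (j | j) <;>
      simp only [r_mul_r, r_mul_sr, sr_mul_r, sr_mul_sr, map_add, map_sub, ← ofAdd_add] <;>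
      congr 1 <;> grind

@[simp] lemma parity_r (h2 : 2 ∣ n) (ε : ZMod 2) (i : ZMod n) :
    parity h2 ε (r i) = .ofAdd (ZMod.castHom h2 (ZMod 2) i) := rfl

@[simp] lemma parity_sr (h2 : 2 ∣ n) (ε : ZMod 2) (i : ZMod n) :
    parity h2 ε (sr i) = .ofAdd (ZMod.castHom h2 (ZMod 2) i + ε) := rfl

lemma closure_r_one_sq_sr_le_ker (h2 : 2 ∣ n) (j : ZMod n) :
    Subgroup.closure {r 1 ^ 2, sr j} ≤ (parity h2 (ZMod.castHom h2 (ZMod 2) j)).ker := by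
  rw [Subgroup.closure_le]
  rintro x (rfl | rfl)
  · rw [SetLike.mem_coe, MonoidHom.mem_ker, r_one_sq, parity_r, map_ofNat]
    rfl
  · rw [SetLike.mem_coe, MonoidHom.mem_ker, parity_sr, CharTwo.add_self_eq_zero]
    rfl

lemma r_half_notMem_closure (h2 : 2 ∣ n) (hodd : Odd (n / 2)) (j : ZMod n) :
    r ((n / 2 : ℕ) : ZMod n) ∉ Subgroup.closure {r 1 ^ 2, sr j} := fun h => by
  have h1 := closure_r_one_sq_sr_le_ker h2 j h
  rw [MonoidHom.mem_ker, parity_r, map_natCast, hodd.natCast_zmod_two, ofAdd_eq_one] at h1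
  exact one_ne_zero h1

lemma exists_four_mul_ne (hn : 10 ≤ n) (hmod : n % 4 = 2) (c : ZMod n) :
    ∃ s : ℕ, 4 * (s : ZMod n) ≠ 0 ∧ 4 * (s : ZMod n) ≠ c ∧ 4 * (s : ZMod n) ≠ -c := by
  have hcast : ∀ m : ℕ, ¬ n ∣ m → (m : ZMod n) ≠ 0 :=
    fun m hm h => hm ((ZMod.natCast_eq_zero_iff m n).mp h)
  have h4 : (4 : ZMod n) ≠ 0 := by
    exact_mod_cast hcast 4 fun h => by have := Nat.le_of_dvd (by norm_num) h; omega
  have h8 : (8 : ZMod n) ≠ 0 := by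
    exact_mod_cast hcast 8 fun h => by have := Nat.le_of_dvd (by norm_num) h; omega
  have h12 : (12 : ZMod n) ≠ 0 := by
    exact_mod_cast hcast 12 fun h => by
      have := Nat.le_of_dvd (by norm_num) h; interval_cases n <;> omega
  by_cases hc : c = 4 ∨ c = -4
  · refine ⟨2, ?_, ?_, ?_⟩ <;> intro h <;> push_cast at h
    · exact h8 (by linear_combination h)
    · rcases hc with rfl | rfl
      · exact h4 (by linear_combination h)
      · exact h12 (by linear_combination h)
    · rcases hc with rfl | rfl
      · exact h12 (by linear_combination h)
      · exact h4 (by linear_combination h)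
  · push Not at hc
    refine ⟨1, ?_, ?_, ?_⟩ <;> intro h <;> push_cast at h
    · exact h4 (by linear_combination h)
    · exact hc.1 (by linear_combination -h)
    · exact hc.2 (by linear_combination h)

lemma comm'_r_ne (t c : ZMod n) (hc : c ≠ 0) (htc : 2 * t ≠ c) (htc' : 2 * t ≠ -c)
    (y : DihedralGroup n) : comm' (r t) y ≠ r c ∧ comm' (r t) y ≠ (r c)⁻¹ := by
  rcases y with j | j
  · rw [comm'_r_r, one_def, inv_r]
    exact ⟨fun h => hc (r.inj h).symm, fun h => hc (neg_eq_zero.mp (r.inj h).symm)⟩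
  · rw [comm'_r_sr, inv_r]
    exact ⟨fun h => htc' (by rw [← r.inj h, neg_neg]),
      fun h => htc (neg_injective (r.inj h))⟩

lemma exists_isUniversal_gnc_r {H : Subgroup (DihedralGroup n)} {t c : ZMod n} (htH : r t ∈ H)
    (hc : c ≠ 0) (ht : 2 * t ≠ 0) (htc : 2 * t ≠ c) (htc' : 2 * t ≠ -c) :
    ∃ v, (gnc (DihedralGroup n) H (r c)).IsUniversal v :=
  ⟨⟨r t, notMem_relCenter_of_notMem_center (mt r_mem_center_iff.mp ht)⟩,
    gnc_isUniversal htH (comm'_r_ne t c hc htc htc')⟩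

end DihedralGroup

open DihedralGroup in
/-- for even `n ≥ 8` with `n/2` odd, `G = D_{2n}`, `H = ⟨a², b⟩` or
`⟨a², ab⟩` and `g ∈ ⟨a²⟩`: if `g = 1` then `Δ_{H,G}^g` is not connected; if
`g ≠ 1` then some vertex is adjacent to all other vertices, the graph is connected,
and its diameter is at most `2`. -/
theorem stmt18 (n : ℕ) (hn : 8 ≤ n) (hne : Even n) (hodd : Odd (n / 2))
    (H : Subgroup (DihedralGroup n))
    (hH : H = Subgroup.closure {(DihedralGroup.r 1 : DihedralGroup n) ^ 2, DihedralGroup.sr 0} ∨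
          H = Subgroup.closure {(DihedralGroup.r 1 : DihedralGroup n) ^ 2, (DihedralGroup.r 1 : DihedralGroup n) * DihedralGroup.sr 0})
    (g : DihedralGroup n)
    (hg : g ∈ Subgroup.zpowers ((DihedralGroup.r 1 : DihedralGroup n) ^ 2)) :
    (g = 1 → ¬ (gnc (DihedralGroup n) H g).Connected) ∧
    (g ≠ 1 →
      (∃ v, ∀ w, w ≠ v → (gnc (DihedralGroup n) H g).Adj v w) ∧
      (gnc (DihedralGroup n) H g).Connected ∧
      (gnc (DihedralGroup n) H g).diam ≤ 2) := by
  have h2 : 2 ∣ n := even_iff_two_dvd.mp hne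
  have hn10 : 10 ≤ n := by have := Nat.odd_iff.mp hodd; omega
  have hmod : n % 4 = 2 := by have := Nat.odd_iff.mp hodd; omega
  obtain ⟨j, rfl⟩ : ∃ j : ZMod n, H = Subgroup.closure {r 1 ^ 2, sr j} := by
    rcases hH with rfl | rfl
    · exact ⟨0, rfl⟩
    · exact ⟨-1, by rw [r_mul_sr, zero_sub]⟩
  refine ⟨?_, fun hg1 => ?_⟩
  · rintro rfl
    exact gnc_one_not_connected (r_mem_center_iff.mpr (two_mul_natCast_half h2))
      (r_half_notMem_closure h2 hodd j) (sr_notMem_center (by omega) 0)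
  · obtain ⟨k, rfl⟩ := Subgroup.mem_zpowers_iff.mp hg
    have hgk : (r 1 ^ 2) ^ k = r (2 * (k : ZMod n)) := by rw [r_one_sq, r_zpow]
    rw [hgk] at hg1 ⊢
    obtain ⟨s, hs0, hsk, hsk'⟩ := exists_four_mul_ne hn10 hmod (2 * k)
    have hmem : r (2 * (s : ZMod n)) ∈ Subgroup.closure {r 1 ^ 2, sr j} := by
      rw [← r_pow, ← r_one_sq]
      exact pow_mem (Subgroup.subset_closure (Set.mem_insert _ _)) s
    have h4 : 2 * (2 * (s : ZMod n)) = 4 * s := by ring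
    obtain ⟨v, hv⟩ := exists_isUniversal_gnc_r hmem (fun h => hg1 (by rw [h, r_zero]))
      (h4 ▸ hs0) (h4 ▸ hsk) (h4 ▸ hsk')
    exact ⟨⟨v, fun w hw => hv (Ne.symm hw)⟩, .of_isUniversal hv, hv.diam_le_two⟩
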